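/- arXiv:1602.02345 — 2 statements merged into one kernel-verified Lean document; each statement's English description precedes it below -/
import Mathlib

section
/- If T_1, …, T_n are mutually independent and the family {F_θ} satisfies the MLR assumption, then Procedure 2 (the directional fixed sequence procedure with constant critical value α at every step) satisfies mdFWER ≤ α for every n and every configuration of parameters θ_1,…,θ_n ∈ ℝ. -/
/-!
Let `c < 0 < -c` be the two-sided critical values, so test `i` rejects iff `T i ∈ Iic c ∪ Ici (-c)`.
If the procedure makes a directional error, look at the first index `i` where it does: every
earlier test rejected correctly and test `i` rejected wrongly. By independence this event has
probability `dᵢ ∏_{j<i} pⱼ`, where `dᵢ` and `pᵢ` are the probabilities of a wrong and of a correct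
rejection at step `i`. By the MLR property, the ratio of the mass of the wrong-sign tail to the
mass of `(c, -c]` under `F_{θᵢ}` is at most its value `(α/2) / (1 - α)` under `F_0`, and this
yields `dᵢ ≤ α (1 - pᵢ)`; summing, `∑ dᵢ ∏_{j<i} pⱼ ≤ α (1 - ∏ pⱼ) ≤ α`.
-/

open MeasureTheory ProbabilityTheory Set Filter Topology

theorem exists_first_of_exists {ι : Type*} [LinearOrder ι] [WellFoundedLT ι] {A B : ι → Prop}
    (h : ∃ i, (∀ j ≤ i, A j) ∧ B i) : ∃ i, (A i ∧ B i) ∧ ∀ j < i, A j ∧ ¬ B j := by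
  obtain ⟨i, ⟨hA, hB⟩, hmin⟩ := wellFounded_lt.has_min {i | (∀ j ≤ i, A j) ∧ B i} h
  exact ⟨i, ⟨hA i le_rfl, hB⟩, fun j hj =>
    ⟨hA j hj.le, fun hBj => hmin j ⟨fun k hk => hA k (hk.trans hj.le), hBj⟩ hj⟩⟩

theorem Finset.sum_mul_prod_filter_lt_le {ι : Type*} [LinearOrder ι] (s : Finset ι)
    {d p : ι → ℝ} {α : ℝ} (hp : ∀ i ∈ s, 0 ≤ p i) (h : ∀ i ∈ s, d i ≤ α * (1 - p i)) :
    ∑ i ∈ s, d i * ∏ j ∈ s with j < i, p j ≤ α * (1 - ∏ i ∈ s, p i) := by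
  calc ∑ i ∈ s, d i * ∏ j ∈ s with j < i, p j
      ≤ ∑ i ∈ s, α * (1 - p i) * ∏ j ∈ s with j < i, p j :=
        Finset.sum_le_sum fun i hi => mul_le_mul_of_nonneg_right (h i hi)
          (Finset.prod_nonneg fun j hj => hp j (Finset.mem_filter.1 hj).1)
    _ = α * (1 - ∏ i ∈ s, p i) := by
        have := Finset.prod_one_sub_ordered s (fun i => 1 - p i)
        simp only [sub_sub_cancel] at this
        rw [this, sub_sub_cancel, Finset.mul_sum]
        simp only [mul_assoc]

theorem ProbabilityTheory.iIndepFun.measure_preimage_inter_biInter {Ω ι β : Type*}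
    [MeasurableSpace Ω] [MeasurableSpace β] {μ : Measure Ω} {X : ι → Ω → β}
    (hX : iIndepFun X μ) {s : Finset ι} {i : ι} (hi : i ∉ s) {D : Set β} (hD : MeasurableSet D)
    {R : ι → Set β} (hR : ∀ j, MeasurableSet (R j)) :
    μ (X i ⁻¹' D ∩ ⋂ j ∈ s, X j ⁻¹' R j) = μ (X i ⁻¹' D) * ∏ j ∈ s, μ (X j ⁻¹' R j) := by
  classical
  have h := hX.measure_inter_preimage_eq_mul (insert i s) (sets := Function.update R i D)
    fun j _ => by rcases eq_or_ne j i with rfl | hj <;> simp [*]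
  rw [Finset.set_biInter_insert, Finset.prod_insert hi, Function.update_self] at h
  have hupd : ∀ j ∈ s, X j ⁻¹' Function.update R i D j = X j ⁻¹' R j := fun j hj => by
    rw [Function.update_of_ne (ne_of_mem_of_not_mem hj hi)]
  rwa [Finset.prod_congr rfl fun j hj => by rw [hupd j hj], iInter₂_congr hupd] at h

/-- `A i` is the rejection region of the `i`-th test and `B i` its error region. -/
theorem measureReal_exists_first_error_le {Ω ι β : Type*} [MeasurableSpace Ω]
    [MeasurableSpace β] {μ : Measure Ω} [IsProbabilityMeasure μ] [Fintype ι] [LinearOrder ι]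
    {X : ι → Ω → β} (hX : iIndepFun X μ) {A B : ι → Set β}
    (hA : ∀ i, MeasurableSet (A i)) (hB : ∀ i, MeasurableSet (B i)) {α : ℝ} (hα : 0 ≤ α)
    (h : ∀ i, μ.real (X i ⁻¹' (A i ∩ B i)) ≤ α * (1 - μ.real (X i ⁻¹' (A i \ B i)))) :
    μ.real {ω | ∃ i, (∀ j ≤ i, X j ω ∈ A j) ∧ X i ω ∈ B i} ≤ α := by
  classical
  set C : ι → Set Ω := fun i =>
    X i ⁻¹' (A i ∩ B i) ∩ ⋂ j ∈ Finset.univ.filter (· < i), X j ⁻¹' (A j \ B j)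
  have hsub : {ω | ∃ i, (∀ j ≤ i, X j ω ∈ A j) ∧ X i ω ∈ B i} ⊆ ⋃ i, C i := by
    intro ω hω
    obtain ⟨i, hi, hlt⟩ := exists_first_of_exists hω
    exact mem_iUnion.2 ⟨i, hi, mem_iInter₂.2 fun j hj => hlt j (Finset.mem_filter.1 hj).2⟩
  have hC : ∀ i, μ.real (C i) = μ.real (X i ⁻¹' (A i ∩ B i)) *
      ∏ j with j < i, μ.real (X j ⁻¹' (A j \ B j)) := fun i => by
    rw [measureReal_def, hX.measure_preimage_inter_biInter (s := Finset.univ.filter (· < i))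
      (by simp) ((hA i).inter (hB i)) fun j => (hA j).diff (hB j), ENNReal.toReal_mul,
      ENNReal.toReal_prod]
    rfl
  calc μ.real _ ≤ μ.real (⋃ i, C i) := measureReal_mono hsub
    _ ≤ ∑ i, μ.real (C i) := measureReal_iUnion_fintype_le C
    _ ≤ α * (1 - ∏ i, μ.real (X i ⁻¹' (A i \ B i))) := by
      simp only [hC]
      exact Finset.sum_mul_prod_filter_lt_le _ (fun i _ => measureReal_nonneg) fun i _ => h i
    _ ≤ α := mul_le_of_le_one_right hα
      (sub_le_self _ (Finset.prod_nonneg fun i _ => measureReal_nonneg))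

theorem tendsto_atBot_of_eq_integral_Iic {g G : ℝ → ℝ} (hG : ∀ x, G x = ∫ t in Iic x, g t) :
    Tendsto G atBot (𝓝 0) :=
  (tendsto_integral_Iic_zero (a := id) tendsto_id).congr fun x => (hG x).symm

theorem integrableOn_Iic_of_tendsto_atTop {g G : ℝ → ℝ} (hG : ∀ x, G x = ∫ t in Iic x, g t)
    {l : ℝ} (hl : l ≠ 0) (hlim : Tendsto G atTop (𝓝 l)) (x : ℝ) : IntegrableOn g (Iic x) := by
  obtain ⟨y, hy, hxy⟩ := ((hlim.eventually_ne hl).and (eventually_ge_atTop x)).exists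
  by_contra hx
  exact hy ((hG y).trans
    (integral_undef fun h => hx (IntegrableOn.mono_set h (Iic_subset_Iic.2 hxy))))

/-- The ratio `g / h` is nondecreasing, written without division. -/
def HasMonotoneLikelihoodRatio (g h : ℝ → ℝ) : Prop :=
  ∀ s t, s < t → g s * h t ≤ g t * h s

namespace HasMonotoneLikelihoodRatio

variable {g h G H : ℝ → ℝ}

theorem setIntegral_mul_le (hgh : HasMonotoneLikelihoodRatio g h) {A B : Set ℝ}
    (hA : MeasurableSet A) (hB : MeasurableSet B) (hAB : ∀ s ∈ A, ∀ t ∈ B, s < t)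
    (hgA : IntegrableOn g A) (hhA : IntegrableOn h A)
    (hgB : IntegrableOn g B) (hhB : IntegrableOn h B) :
    (∫ s in A, g s) * (∫ t in B, h t) ≤ (∫ s in A, h s) * (∫ t in B, g t) := by
  rw [← setIntegral_prod_mul, ← setIntegral_prod_mul]
  refine setIntegral_mono_on ?_ ?_ (hA.prod hB) fun z hz =>
    (hgh z.1 z.2 (hAB _ hz.1 _ hz.2)).trans_eq (mul_comm _ _)
  · rw [IntegrableOn, ← Measure.prod_restrict]
    exact hgA.mul_prod hhB
  · rw [IntegrableOn, ← Measure.prod_restrict]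
    exact hhA.mul_prod hgB

theorem cdf_cross_le (hgh : HasMonotoneLikelihoodRatio g h)
    (hG : ∀ x, G x = ∫ t in Iic x, g t) (hH : ∀ x, H x = ∫ t in Iic x, h t)
    (hg : ∀ x, IntegrableOn g (Iic x)) (hh : ∀ x, IntegrableOn h (Iic x))
    {a b c : ℝ} (hab : a ≤ b) (hbc : b ≤ c) :
    (G b - G a) * (H c - H b) ≤ (H b - H a) * (G c - G b) := by
  have hIoc : ∀ (F f : ℝ → ℝ), (∀ x, F x = ∫ t in Iic x, f t) →
      (∀ x, IntegrableOn f (Iic x)) → ∀ {x y}, x ≤ y → F y - F x = ∫ t in Ioc x y, f t :=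
    fun F f hF hf x y hxy => by
      rw [hF, hF, intervalIntegral.integral_Iic_sub_Iic (hf x) (hf y),
        intervalIntegral.integral_of_le hxy]
  rw [hIoc G g hG hg hab, hIoc H h hH hh hbc, hIoc H h hH hh hab, hIoc G g hG hg hbc]
  exact hgh.setIntegral_mul_le measurableSet_Ioc measurableSet_Ioc
    (fun s hs t ht => hs.2.trans_lt ht.1) ((hg b).mono_set Ioc_subset_Iic_self)
    ((hh b).mono_set Ioc_subset_Iic_self) ((hg c).mono_set Ioc_subset_Iic_self)
    ((hh c).mono_set Ioc_subset_Iic_self)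

theorem cdf_mul_sub_le (hgh : HasMonotoneLikelihoodRatio g h)
    (hG : ∀ x, G x = ∫ t in Iic x, g t) (hH : ∀ x, H x = ∫ t in Iic x, h t)
    (hg : ∀ x, IntegrableOn g (Iic x)) (hh : ∀ x, IntegrableOn h (Iic x))
    {b c : ℝ} (hbc : b ≤ c) :
    G b * (H c - H b) ≤ H b * (G c - G b) := by
  refine le_of_tendsto_of_tendsto (b := atBot) (f := fun a => (G b - G a) * (H c - H b))
    (g := fun a => (H b - H a) * (G c - G b)) ?_ ?_
    ((eventually_le_atBot b).mono fun a hab => hgh.cdf_cross_le hG hH hg hh hab hbc)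
  · simpa using ((tendsto_atBot_of_eq_integral_Iic hG).const_sub (G b)).mul_const (H c - H b)
  · simpa using ((tendsto_atBot_of_eq_integral_Iic hH).const_sub (H b)).mul_const (G c - G b)

theorem sub_mul_one_sub_le (hgh : HasMonotoneLikelihoodRatio g h)
    (hG : ∀ x, G x = ∫ t in Iic x, g t) (hH : ∀ x, H x = ∫ t in Iic x, h t)
    (hg : ∀ x, IntegrableOn g (Iic x)) (hh : ∀ x, IntegrableOn h (Iic x))
    (hGtop : Tendsto G atTop (𝓝 1)) (hHtop : Tendsto H atTop (𝓝 1)) {a b : ℝ} (hab : a ≤ b) :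
    (G b - G a) * (1 - H b) ≤ (H b - H a) * (1 - G b) :=
  le_of_tendsto_of_tendsto (b := atTop) (f := fun c => (G b - G a) * (H c - H b))
    (g := fun c => (H b - H a) * (G c - G b))
    ((hHtop.sub_const (H b)).const_mul _) ((hGtop.sub_const (G b)).const_mul _)
    ((eventually_ge_atTop b).mono fun _ hbc => hgh.cdf_cross_le hG hH hg hh hab hbc)

end HasMonotoneLikelihoodRatio

theorem measureReal_Ici_of_continuous_cdf {μ : Measure ℝ} [IsProbabilityMeasure μ]
    (h : Continuous (cdf μ)) (x : ℝ) : μ.real (Ici x) = 1 - cdf μ x := by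
  have hx : μ {x} = 0 := by
    rw [← measure_cdf μ, StieltjesFunction.measure_singleton,
      h.continuousWithinAt.leftLim_eq, sub_self, ENNReal.ofReal_zero]
  rw [← measureReal_congr (Ioi_ae_eq_Ici' hx), ← compl_Iic,
    probReal_compl_eq_one_sub measurableSet_Iic, cdf_eq_real]

theorem two_mul_min_le_iff {G : ℝ → ℝ} (hG : StrictMono G) {α c c' : ℝ} (hc : G c = α / 2)
    (hc' : G c' = 1 - α / 2) (x : ℝ) : 2 * min (G x) (1 - G x) ≤ α ↔ x ∈ Iic c ∪ Ici c' := by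
  rw [← le_div_iff₀' two_pos, min_le_iff, sub_le_comm, ← hc', ← hc, hG.le_iff_le,
    hG.le_iff_le]
  rfl

theorem exists_neg_eq_half_of_symm {G : ℝ → ℝ} (hcont : Continuous G) (hG : StrictMono G)
    (hsym : ∀ x, G (-x) = 1 - G x) (hbot : Tendsto G atBot (𝓝 0)) {α : ℝ} (hα0 : 0 < α)
    (hα1 : α < 1) : ∃ c < 0, G c = α / 2 := by
  have h0 : G 0 = 1 / 2 := by linarith [neg_zero (G := ℝ) ▸ hsym 0]
  obtain ⟨c, hc⟩ := mem_range_of_exists_le_of_exists_ge hcont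
    ((hbot.eventually (gt_mem_nhds (half_pos hα0))).exists.imp fun _ => le_of_lt)
    ⟨0, by rw [h0]; linarith⟩
  exact ⟨c, hG.lt_iff_lt.1 (by rw [hc, h0]; linarith), hc⟩

/-- The observations at which a rejection of `θ = 0` is a type 1 or type 3 error. -/
def errorSet (θ : ℝ) : Set ℝ := {x | θ = 0 ∨ θ ≠ 0 ∧ θ * x < 0}

theorem errorSet_zero : errorSet 0 = univ := by simp [errorSet]

theorem errorSet_of_pos {θ : ℝ} (hθ : 0 < θ) : errorSet θ = Iio 0 := by
  ext x; simp [errorSet, hθ.ne', mul_neg_iff, hθ, hθ.not_gt]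

theorem errorSet_of_neg {θ : ℝ} (hθ : θ < 0) : errorSet θ = Ioi 0 := by
  ext x; simp [errorSet, hθ.ne, mul_neg_iff, hθ, hθ.not_gt]

theorem measurableSet_errorSet (θ : ℝ) : MeasurableSet (errorSet θ) := by
  rcases lt_trichotomy θ 0 with hθ | rfl | hθ
  · exact errorSet_of_neg hθ ▸ measurableSet_Ioi
  · exact errorSet_zero ▸ MeasurableSet.univ
  · exact errorSet_of_pos hθ ▸ measurableSet_Iio

theorem measureReal_rejection_inter_errorSet_le {F f : ℝ → ℝ → ℝ}
    (hf_cdf : ∀ θ x, F θ x = ∫ t in Iic x, f θ t)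
    (hMLR : ∀ θ θ', θ < θ' → HasMonotoneLikelihoodRatio (f θ') (f θ))
    (hF0 : Tendsto (F 0) atTop (𝓝 1)) {μ : Measure ℝ} [IsProbabilityMeasure μ] {θ : ℝ}
    (hμ : cdf μ = F θ) (hcont : Continuous (F θ)) {α c : ℝ} (hα : α ≤ 1) (hc : c < 0)
    (hFc : F 0 c = α / 2) (hFc' : F 0 (-c) = 1 - α / 2) :
    μ.real ((Iic c ∪ Ici (-c)) ∩ errorSet θ) ≤
      α * (1 - μ.real ((Iic c ∪ Ici (-c)) \ errorSet θ)) := by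
  have hf : ∀ θ', Tendsto (F θ') atTop (𝓝 1) → ∀ x, IntegrableOn (f θ') (Iic x) :=
    fun θ' => integrableOn_Iic_of_tendsto_atTop (hf_cdf θ') one_ne_zero
  have hFθ : Tendsto (F θ) atTop (𝓝 1) := hμ ▸ tendsto_cdf_atTop μ
  have hIic : μ.real (Iic c) = F θ c := by rw [← cdf_eq_real, hμ]
  have hIci : μ.real (Ici (-c)) = 1 - F θ (-c) := by
    rw [measureReal_Ici_of_continuous_cdf (hμ ▸ hcont), hμ]
  have hIic0 : 0 ≤ F θ c := hIic ▸ measureReal_nonneg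
  have hIci0 : 0 ≤ 1 - F θ (-c) := hIci ▸ measureReal_nonneg
  have hcc : c ≤ -c := by linarith
  rcases lt_trichotomy θ 0 with hθ | rfl | hθ
  · have hD : (Iic c ∪ Ici (-c)) ∩ errorSet θ = Ici (-c) := by
      rw [errorSet_of_neg hθ]; ext x; grind
    have hR : (Iic c ∪ Ici (-c)) \ errorSet θ = Iic c := by
      rw [errorSet_of_neg hθ]; ext x; grind
    have := (hMLR θ 0 hθ).sub_mul_one_sub_le (hf_cdf 0) (hf_cdf θ) (hf 0 hF0) (hf θ hFθ)
      hF0 hFθ hcc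
    rw [hFc, hFc'] at this
    rw [hD, hR, hIic, hIci]
    nlinarith
  · have hdisj : Disjoint (Iic c) (Ici (-c)) := Iic_disjoint_Ici.2 (by linarith)
    rw [errorSet_zero, inter_univ, sdiff_univ, measureReal_empty,
      measureReal_union hdisj measurableSet_Ici, hIic, hIci, hFc, hFc']
    linarith
  · have hD : (Iic c ∪ Ici (-c)) ∩ errorSet θ = Iic c := by
      rw [errorSet_of_pos hθ]; ext x; grind
    have hR : (Iic c ∪ Ici (-c)) \ errorSet θ = Ici (-c) := by
      rw [errorSet_of_pos hθ]; ext x; grind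
    have := (hMLR 0 θ hθ).cdf_mul_sub_le (hf_cdf θ) (hf_cdf 0) (hf θ hFθ) (hf 0 hF0) hcc
    rw [hFc, hFc'] at this
    rw [hD, hR, hIic, hIci]
    nlinarith

theorem procedure2_controls_mdFWER_indep_MLR_general
    {Ω : Type*} [MeasurableSpace Ω] (Pr : Measure Ω) [IsProbabilityMeasure Pr]
    (F : ℝ → ℝ → ℝ)
    (hFcont : ∀ θ, Continuous (F θ))
    (hF0strict : StrictMono (F 0))
    (hFsym : ∀ x : ℝ, F 0 (-x) = 1 - F 0 x)
    -- MLR assumption: each F_θ has a density f_θ and likelihood ratios are monotone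
    (f : ℝ → ℝ → ℝ)
    (hf_cdf : ∀ θ x, F θ x = ∫ t in Set.Iic x, f θ t)
    (hMLR : ∀ θ θ' : ℝ, θ < θ' → ∀ x₁ x₂ : ℝ, x₁ < x₂ →
      f θ' x₁ * f θ x₂ ≤ f θ' x₂ * f θ x₁)
    (n : ℕ) (θ : Fin n → ℝ) (T : Fin n → Ω → ℝ)
    (hT : ∀ i, Measurable (T i))
    (hcdf : ∀ i x, (Pr {ω | T i ω ≤ x}).toReal = F (θ i) x)
    (hindep : iIndepFun T Pr)
    (α : ℝ) (hα : α ∈ Set.Ioo (0 : ℝ) 1) :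
    (Pr {ω | ∃ i : Fin n,
        (∀ j : Fin n, j ≤ i →
          2 * min (F 0 (T j ω)) (1 - F 0 (T j ω)) ≤ α) ∧
        (θ i = 0 ∨ (θ i ≠ 0 ∧ θ i * T i ω < 0))}).toReal ≤ α := by
  obtain ⟨hα0, hα1⟩ := hα
  have hF0bot : Tendsto (F 0) atBot (𝓝 0) := tendsto_atBot_of_eq_integral_Iic (hf_cdf 0)
  have hF0top : Tendsto (F 0) atTop (𝓝 1) := by
    simpa [hFsym] using (hF0bot.comp tendsto_neg_atTop_atBot).const_sub 1
  obtain ⟨c, hc, hFc⟩ := exists_neg_eq_half_of_symm (hFcont 0) hF0strict hFsym hF0bot hα0 hα1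
  have hFc' : F 0 (-c) = 1 - α / 2 := by rw [hFsym, hFc]
  have hmap : ∀ i, IsProbabilityMeasure (Pr.map (T i)) :=
    fun i => Measure.isProbabilityMeasure_map (hT i).aemeasurable
  have hlaw : ∀ i, cdf (Pr.map (T i)) = F (θ i) := fun i => funext fun x => by
    rw [cdf_eq_real, map_measureReal_apply (hT i) measurableSet_Iic]
    exact hcdf i x
  refine le_trans (measureReal_mono ?_) (measureReal_exists_first_error_le hindep
    (A := fun _ => Iic c ∪ Ici (-c)) (B := fun i => errorSet (θ i))
    (fun _ => measurableSet_Iic.union measurableSet_Ici) (fun i => measurableSet_errorSet _)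
    hα0.le fun i => ?_)
  · rintro ω ⟨i, hrej, herr⟩
    exact ⟨i, fun j hj => (two_mul_min_le_iff hF0strict hFc hFc' _).1 (hrej j hj), herr⟩
  · rw [← map_measureReal_apply (hT i) ((measurableSet_Iic.union measurableSet_Ici).inter
      (measurableSet_errorSet _)), ← map_measureReal_apply (hT i)
      ((measurableSet_Iic.union measurableSet_Ici).diff (measurableSet_errorSet _))]
    exact measureReal_rejection_inter_errorSet_le hf_cdf hMLR hF0top (hlaw i) (hFcont _)
      hα1.le hc hFc hFc'

/-- Theorem 2: Under mutual independence of T₁,…,T_n and the MLR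
assumption, Procedure 2 (constant critical value α) satisfies mdFWER ≤ α for every n
and every configuration of parameters. -/
theorem procedure2_controls_mdFWER_indep_MLR
    {Ω : Type*} [MeasurableSpace Ω] (Pr : Measure Ω) [IsProbabilityMeasure Pr]
    (F : ℝ → ℝ → ℝ)
    (hFcont : ∀ θ, Continuous (F θ))
    (hFmono : ∀ θ, Monotone (F θ))
    (hF0strict : StrictMono (F 0))
    (hFsym : ∀ x : ℝ, F 0 (-x) = 1 - F 0 x)
    (hstoch : ∀ θ θ' : ℝ, θ ≤ θ' → ∀ x, F θ' x ≤ F θ x)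
    -- MLR assumption: each F_θ has a density f_θ and likelihood ratios are monotone
    (f : ℝ → ℝ → ℝ)
    (hf_nonneg : ∀ θ x, 0 ≤ f θ x)
    (hf_meas : ∀ θ, Measurable (f θ))
    (hf_cdf : ∀ θ x, F θ x = ∫ t in Set.Iic x, f θ t)
    (hMLR : ∀ θ θ' : ℝ, θ < θ' → ∀ x₁ x₂ : ℝ, x₁ < x₂ →
      f θ' x₁ * f θ x₂ ≤ f θ' x₂ * f θ x₁)
    (n : ℕ) (θ : Fin n → ℝ) (T : Fin n → Ω → ℝ)
    (hT : ∀ i, Measurable (T i))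
    (hcdf : ∀ i x, (Pr {ω | T i ω ≤ x}).toReal = F (θ i) x)
    (hindep : iIndepFun T Pr)
    (α : ℝ) (hα : α ∈ Set.Ioo (0 : ℝ) 1) :
    (Pr {ω | ∃ i : Fin n,
        (∀ j : Fin n, j ≤ i →
          2 * min (F 0 (T j ω)) (1 - F 0 (T j ω)) ≤ α) ∧
        (θ i = 0 ∨ (θ i ≠ 0 ∧ θ i * T i ω < 0))}).toReal ≤ α :=
  procedure2_controls_mdFWER_indep_MLR_general Pr F hFcont hF0strict hFsym f hf_cdf hMLR n θ T hT
    hcdf hindep α hα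
end

section
/- Suppose θ_i > 0 for all i = 1,…,n, the family {F_θ} satisfies the MLR assumption, and T_1,…,T_n are positively regression dependent (Assumption 3). For j ∈ {1,…,n−1}, let E_{n−j} = ⋃_{m=j+1}^{n} {T_{j+1} > c_2, …, T_{m−1} > c_2, T_m < c_1} be the event that at least one type 3 error is made when testing H_{j+1},…,H_n with the directional fixed sequence procedure at constant level α. Then, whenever Pr(T_1 > c_2, …, T_j > c_2) > 0, Pr(E_{n−j} | T_1 > c_2, …, T_j > c_2) ≤ α. -/
/-!
Write `G_m` for the event that `T_l > c₂` for all `l < m`. On the conditioning event, a type 3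
error means that `G_m ∩ {T_m < c₁}` occurs for some `m > j`. For `θ > 0` the MLR property gives
`F_θ(c₁) / F_θ(c₂) ≤ F_0(c₁) / F_0(c₂) = (α/2) / (1 - α/2) ≤ α`, and positive regression dependence,
applied to the indicator of the upper set defining `G_m`, gives
`Pr(G_m | T_m < c₁) ≤ Pr(G_m | T_m < c₂)`. Together, `Pr(G_m ∩ {T_m < c₁}) ≤ α Pr(G_m ∩ {T_m < c₂})`,
and the events `G_m ∩ {T_m < c₂}`, `m > j`, are pairwise disjoint subsets of the conditioning event.
-/

open MeasureTheory ProbabilityTheory Set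

theorem IsUpperSet.monotone_indicator_one {α : Type*} [Preorder α] {s : Set α}
    (hs : IsUpperSet s) : Monotone (s.indicator (1 : α → ℝ)) := by
  intro x y hxy
  by_cases hx : x ∈ s
  · rw [indicator_of_mem hx, indicator_of_mem (hs hxy hx)]
    exact le_rfl
  · rw [indicator_of_notMem hx]
    exact indicator_nonneg (fun _ _ => zero_le_one) y

theorem setIntegral_Iic_mul_le_of_mlr {g h : ℝ → ℝ} {a b : ℝ} (hab : a ≤ b)
    (hg : IntegrableOn g (Iic b)) (hh : IntegrableOn h (Iic b))
    (hmlr : ∀ x y, x < y → g x * h y ≤ g y * h x) :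
    (∫ t in Iic a, g t) * ∫ t in Iic b, h t ≤ (∫ t in Iic b, g t) * ∫ t in Iic a, h t := by
  have split : ∀ φ : ℝ → ℝ, IntegrableOn φ (Iic b) →
      ∫ t in Iic b, φ t = (∫ t in Iic a, φ t) + ∫ t in Ioc a b, φ t := fun φ hφ => by
    rw [← Iic_union_Ioc_eq_Iic hab, setIntegral_union (Iic_disjoint_Ioc le_rfl) measurableSet_Ioc
      (hφ.mono_set (Iic_subset_Iic.2 hab)) (hφ.mono_set Ioc_subset_Iic_self)]
  have hg₁ := hg.mono_set (Iic_subset_Iic.2 hab)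
  have hh₁ := hh.mono_set (Iic_subset_Iic.2 hab)
  have hg₂ := hg.mono_set (Ioc_subset_Iic_self (a := a))
  have hh₂ := hh.mono_set (Ioc_subset_Iic_self (a := a))
  have cross : (∫ t in Iic a, g t) * (∫ t in Ioc a b, h t)
      ≤ (∫ t in Ioc a b, g t) * ∫ t in Iic a, h t := by
    have pointwise : ∀ x ∈ Iic a,
        g x * ∫ t in Ioc a b, h t ≤ (∫ t in Ioc a b, g t) * h x := fun x hx => by
      rw [← integral_const_mul, ← integral_mul_const]
      exact setIntegral_mono_on (hh₂.const_mul _) (hg₂.mul_const _) measurableSet_Ioc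
        fun y hy => hmlr x y (lt_of_le_of_lt hx hy.1)
    rw [← integral_mul_const, ← integral_const_mul]
    exact setIntegral_mono_on (hg₁.mul_const _) (hh₁.const_mul _) measurableSet_Iic pointwise
  rw [split g hg, split h hh]
  linarith

theorem cdf_le_mul_cdf_of_mlr {G g h : ℝ → ℝ} {a b α : ℝ} (hab : a ≤ b)
    (hα₀ : 0 ≤ α) (hα₁ : α ≤ 1) (hG : Monotone G) (hGg : ∀ x, G x = ∫ t in Iic x, g t)
    (hg : ∀ x, 0 ≤ g x) (hha : ∫ t in Iic a, h t = α / 2) (hhb : ∫ t in Iic b, h t = 1 - α / 2)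
    (hmlr : ∀ x y, x < y → g x * h y ≤ g y * h x) :
    G a ≤ α * G b := by
  by_cases hgb : IntegrableOn g (Iic b)
  · have hhb_int : IntegrableOn h (Iic b) := by
      by_contra hni
      rw [integral_undef hni] at hhb
      linarith
    have hratio := setIntegral_Iic_mul_le_of_mlr hab hgb hhb_int hmlr
    rw [hha, hhb, ← hGg, ← hGg] at hratio
    have hGb : 0 ≤ G b := hGg b ▸ setIntegral_nonneg measurableSet_Iic fun x _ => hg x
    nlinarith [mul_nonneg (mul_nonneg hα₀ hGb) (sub_nonneg.2 hα₁)]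
  · -- `G b` is the junk value `0` of a non-integrable integral; monotonicity of `G` copes with it
    have hGb : G b = 0 := by rw [hGg, integral_undef hgb]
    have hGa : 0 ≤ G a := hGg a ▸ integral_nonneg fun x => hg x
    rw [hGb, mul_zero]
    linarith [hG hab]

section Measure

variable {Ω : Type*} [MeasurableSpace Ω] {μ : Measure Ω}

theorem measureReal_lt_eq_of_continuous [IsFiniteMeasure μ] {X : Ω → ℝ} {G : ℝ → ℝ}
    (hG : Continuous G) (hX : ∀ x, μ.real {ω | X ω ≤ x} = G x) (x : ℝ) :
    μ.real {ω | X ω < x} = G x := by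
  refine le_antisymm ((measureReal_mono fun ω (h : X ω < x) => h.le).trans_eq (hX x)) ?_
  refine le_of_tendsto (hG.continuousAt.tendsto.mono_left nhdsWithin_le_nhds)
    (eventually_nhdsWithin_of_forall (s := Iio x) fun y hy => ?_)
  exact hX y ▸ measureReal_mono fun ω (h : X ω ≤ y) => h.trans_lt hy

theorem setIntegral_indicator_one_comp {β : Type*} [MeasurableSpace β] {Y : Ω → β}
    (hY : Measurable Y) {S : Set β} (hS : MeasurableSet S) (B : Set Ω) :
    ∫ ω in B, S.indicator 1 (Y ω) ∂μ = μ.real (Y ⁻¹' S ∩ B) := by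
  simp_rw [← indicator_comp_right, Pi.one_comp]
  rw [integral_indicator_one (hY hS), measureReal_restrict_apply (hY hS)]

theorem measureReal_inter_le_mul_of_cond_le [IsFiniteMeasure μ] {A B B' : Set Ω} {α : ℝ}
    (hBB' : B ⊆ B') (hα : 0 ≤ α) (hB : μ.real B ≤ α * μ.real B')
    (hcond : μ B ≠ 0 → μ B' ≠ 0 →
      μ.real (A ∩ B) / μ.real B ≤ μ.real (A ∩ B') / μ.real B') :
    μ.real (A ∩ B) ≤ α * μ.real (A ∩ B') := by
  by_cases hB0 : μ B = 0
  · rw [measureReal_def, measure_mono_null inter_subset_right hB0, ENNReal.toReal_zero]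
    positivity
  have hB'0 : μ B' ≠ 0 := fun h => hB0 (measure_mono_null hBB' h)
  have hpos : 0 < μ.real B := ENNReal.toReal_pos hB0 (measure_ne_top _ _)
  have hpos' : 0 < μ.real B' := ENNReal.toReal_pos hB'0 (measure_ne_top _ _)
  calc μ.real (A ∩ B) = μ.real (A ∩ B) / μ.real B * μ.real B := by field_simp
    _ ≤ μ.real (A ∩ B') / μ.real B' * (α * μ.real B') :=
        mul_le_mul (hcond hB0 hB'0) hB hpos.le (by positivity)
    _ = α * μ.real (A ∩ B') := by field_simp

end Measure

section FixedSequence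

variable {ι : Type*} [LinearOrder ι]

def aboveBefore (c : ℝ) (m : ι) : Set (ι → ℝ) := {y | ∀ l < m, c < y l}

theorem isUpperSet_aboveBefore (c : ℝ) (m : ι) : IsUpperSet (aboveBefore c m) :=
  fun _ _ hxy hx l hl => (hx l hl).trans_le (hxy l)

theorem measurableSet_aboveBefore [Countable ι] (c : ℝ) (m : ι) :
    MeasurableSet (aboveBefore c m) := by
  simp only [aboveBefore, ofPred_forall]
  exact .iInter fun l => .iInter fun _ => measurableSet_lt measurable_const (measurable_pi_apply l)

variable [LocallyFiniteOrderTop ι] {Ω : Type*} [MeasurableSpace Ω] {μ : Measure Ω}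

theorem sum_measureReal_aboveBefore_inter_lt_le [IsFiniteMeasure μ] [Countable ι]
    {T : ι → Ω → ℝ} (hT : ∀ i, Measurable (T i)) (c : ℝ) (j : ι) :
    ∑ m ∈ Finset.Ioi j, μ.real ((fun ω i => T i ω) ⁻¹' aboveBefore c m ∩ {ω | T m ω < c})
      ≤ μ.real {ω | ∀ l ≤ j, c < T l ω} := by
  have hdisj : (Finset.Ioi j : Set ι).PairwiseDisjoint
      fun m => (fun ω i => T i ω) ⁻¹' aboveBefore c m ∩ {ω | T m ω < c} := by
    intro m _ m' _ hne
    refine disjoint_left.2 fun ω ⟨hm, hmc⟩ ⟨hm', hm'c⟩ => ?_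
    rcases hne.lt_or_gt with h | h
    · exact (hm' m h).not_gt hmc
    · exact (hm m' h).not_gt hm'c
  rw [← measureReal_biUnion_finset hdisj fun m _ =>
    (measurable_pi_lambda _ hT (measurableSet_aboveBefore c m)).inter
      (measurableSet_lt (hT m) measurable_const)]
  refine measureReal_mono ?_
  simp only [iUnion_subset_iff, Finset.mem_Ioi]
  exact fun m hjm ω ⟨hm, _⟩ l hl => hm l (hl.trans_lt hjm)

theorem measureReal_fixedSequence_type3_inter_le [IsFiniteMeasure μ] [Countable ι]
    {T : ι → Ω → ℝ} (hT : ∀ i, Measurable (T i)) {c₁ c₂ α : ℝ} (hα : 0 ≤ α)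
    (hstep : ∀ m, μ.real ((fun ω i => T i ω) ⁻¹' aboveBefore c₂ m ∩ {ω | T m ω < c₁})
      ≤ α * μ.real ((fun ω i => T i ω) ⁻¹' aboveBefore c₂ m ∩ {ω | T m ω < c₂})) (j : ι) :
    μ.real ({ω | ∃ m, j < m ∧ (∀ l, j < l → l < m → c₂ < T l ω) ∧ T m ω < c₁}
        ∩ {ω | ∀ l ≤ j, c₂ < T l ω})
      ≤ α * μ.real {ω | ∀ l ≤ j, c₂ < T l ω} := by
  have hcover : {ω | ∃ m, j < m ∧ (∀ l, j < l → l < m → c₂ < T l ω) ∧ T m ω < c₁}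
        ∩ {ω | ∀ l ≤ j, c₂ < T l ω}
      ⊆ ⋃ m ∈ Finset.Ioi j, (fun ω i => T i ω) ⁻¹' aboveBefore c₂ m ∩ {ω | T m ω < c₁} := by
    rintro ω ⟨⟨m, hjm, hbetween, hdrop⟩, hfirst⟩
    refine mem_biUnion (Finset.mem_Ioi.2 hjm) ⟨fun l hl => ?_, hdrop⟩
    rcases le_or_gt l j with h | h
    · exact hfirst l h
    · exact hbetween l h hl
  calc _ ≤ _ := measureReal_mono hcover (measure_ne_top _ _)
    _ ≤ _ := measureReal_biUnion_finset_le _ _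
    _ ≤ ∑ m ∈ Finset.Ioi j, α * μ.real
          ((fun ω i => T i ω) ⁻¹' aboveBefore c₂ m ∩ {ω | T m ω < c₂}) :=
        Finset.sum_le_sum fun m _ => hstep m
    _ ≤ _ := by
        rw [← Finset.mul_sum]
        exact mul_le_mul_of_nonneg_left (sum_measureReal_aboveBefore_inter_lt_le hT c₂ j) hα

end FixedSequence

theorem conditional_type3_error_bound_lemma4_general
    {Ω : Type*} [MeasurableSpace Ω] (Pr : Measure Ω) [IsProbabilityMeasure Pr]
    (F : ℝ → ℝ → ℝ)
    (hFcont : ∀ θ, Continuous (F θ))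
    (hFmono : ∀ θ, Monotone (F θ))
    -- MLR assumption (Assumption 2)
    (f : ℝ → ℝ → ℝ)
    (hf_nonneg : ∀ θ x, 0 ≤ f θ x)
    (hf_cdf : ∀ θ x, F θ x = ∫ t in Set.Iic x, f θ t)
    (hMLR : ∀ θ θ' : ℝ, θ < θ' → ∀ x₁ x₂ : ℝ, x₁ < x₂ →
      f θ' x₁ * f θ x₂ ≤ f θ' x₂ * f θ x₁)
    (n : ℕ) (θ : Fin n → ℝ) (hθpos : ∀ i, 0 < θ i)
    (T : Fin n → Ω → ℝ) (hT : ∀ i, Measurable (T i))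
    (hcdf : ∀ i x, (Pr {ω | T i ω ≤ x}).toReal = F (θ i) x)
    -- Positive regression dependence (Assumption 3, all nulls false with θ_i > 0)
    (hPRD : ∀ k : Fin n, ∀ φ : (Fin n → ℝ) → ℝ,
      Measurable φ → Monotone φ → (∃ C, ∀ x, |φ x| ≤ C) →
      ∀ u u' : ℝ, u ≤ u' →
        (Pr {ω | u ≤ T k ω} ≠ 0 → Pr {ω | u' ≤ T k ω} ≠ 0 →
          (∫ ω in {ω | u ≤ T k ω}, φ (fun i => T i ω) ∂Pr)
              / (Pr {ω | u ≤ T k ω}).toReal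
            ≤ (∫ ω in {ω | u' ≤ T k ω}, φ (fun i => T i ω) ∂Pr)
              / (Pr {ω | u' ≤ T k ω}).toReal) ∧
        (Pr {ω | T k ω < u} ≠ 0 → Pr {ω | T k ω < u'} ≠ 0 →
          (∫ ω in {ω | T k ω < u}, φ (fun i => T i ω) ∂Pr)
              / (Pr {ω | T k ω < u}).toReal
            ≤ (∫ ω in {ω | T k ω < u'}, φ (fun i => T i ω) ∂Pr)
              / (Pr {ω | T k ω < u'}).toReal))
    (α : ℝ) (hα : α ∈ Set.Ioo (0 : ℝ) 1)
    (c₁ c₂ : ℝ) (hc₁ : F 0 c₁ = α / 2) (hc₂ : F 0 c₂ = 1 - α / 2) :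
    ∀ j : Fin n, (j : ℕ) + 1 < n →
      Pr {ω | ∀ l : Fin n, l ≤ j → c₂ < T l ω} ≠ 0 →
      (Pr ({ω | ∃ m : Fin n, j < m ∧ (∀ l : Fin n, j < l → l < m → c₂ < T l ω) ∧
              T m ω < c₁}
            ∩ {ω | ∀ l : Fin n, l ≤ j → c₂ < T l ω})).toReal
          / (Pr {ω | ∀ l : Fin n, l ≤ j → c₂ < T l ω}).toReal
        ≤ α := by
  obtain ⟨hα₀, hα₁⟩ := hα
  intro j _ hA
  have hc : c₁ ≤ c₂ := ((hFmono 0).reflect_lt (by linarith : F 0 c₁ < F 0 c₂)).le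
  have hmarg : ∀ m, Pr.real {ω | T m ω < c₁} ≤ α * Pr.real {ω | T m ω < c₂} := fun m => by
    rw [measureReal_lt_eq_of_continuous (hFcont _) (hcdf m),
      measureReal_lt_eq_of_continuous (hFcont _) (hcdf m)]
    exact cdf_le_mul_cdf_of_mlr hc hα₀.le hα₁.le (hFmono _) (hf_cdf _) (hf_nonneg _)
      (hf_cdf 0 c₁ ▸ hc₁) (hf_cdf 0 c₂ ▸ hc₂) (hMLR 0 _ (hθpos m))
  have hstep : ∀ m, Pr.real ((fun ω i => T i ω) ⁻¹' aboveBefore c₂ m ∩ {ω | T m ω < c₁})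
      ≤ α * Pr.real ((fun ω i => T i ω) ⁻¹' aboveBefore c₂ m ∩ {ω | T m ω < c₂}) := fun m => by
    have hS := measurableSet_aboveBefore (ι := Fin n) c₂ m
    have hprd := (hPRD m ((aboveBefore c₂ m).indicator 1) (measurable_one.indicator hS)
      (isUpperSet_aboveBefore c₂ m).monotone_indicator_one
      ⟨1, fun x => by simpa using norm_indicator_le_norm_self (1 : (Fin n → ℝ) → ℝ) x⟩ c₁ c₂ hc).2
    simp only [setIntegral_indicator_one_comp (measurable_pi_lambda _ hT) hS] at hprd
    exact measureReal_inter_le_mul_of_cond_le (fun ω (h : T m ω < c₁) => h.trans_le hc)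
      hα₀.le (hmarg m) hprd
  rw [div_le_iff₀ (ENNReal.toReal_pos hA (measure_ne_top _ _))]
  exact measureReal_fixedSequence_type3_inter_le hT hα₀.le hstep j

/-- Lemma 4: If all θ_i > 0, the family satisfies MLR and the
statistics are positively regression dependent, then conditionally on
T₁ > c₂,…,T_j > c₂, the probability of making at least one type 3 error when
testing the remaining hypotheses at constant level α is at most α. -/
theorem conditional_type3_error_bound_lemma4
    {Ω : Type*} [MeasurableSpace Ω] (Pr : Measure Ω) [IsProbabilityMeasure Pr]
    (F : ℝ → ℝ → ℝ)
    (hFcont : ∀ θ, Continuous (F θ))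
    (hFmono : ∀ θ, Monotone (F θ))
    (hF0strict : StrictMono (F 0))
    (hFsym : ∀ x : ℝ, F 0 (-x) = 1 - F 0 x)
    (hstoch : ∀ θ θ' : ℝ, θ ≤ θ' → ∀ x, F θ' x ≤ F θ x)
    -- MLR assumption (Assumption 2)
    (f : ℝ → ℝ → ℝ)
    (hf_nonneg : ∀ θ x, 0 ≤ f θ x)
    (hf_meas : ∀ θ, Measurable (f θ))
    (hf_cdf : ∀ θ x, F θ x = ∫ t in Set.Iic x, f θ t)
    (hMLR : ∀ θ θ' : ℝ, θ < θ' → ∀ x₁ x₂ : ℝ, x₁ < x₂ →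
      f θ' x₁ * f θ x₂ ≤ f θ' x₂ * f θ x₁)
    (n : ℕ) (θ : Fin n → ℝ) (hθpos : ∀ i, 0 < θ i)
    (T : Fin n → Ω → ℝ) (hT : ∀ i, Measurable (T i))
    (hcdf : ∀ i x, (Pr {ω | T i ω ≤ x}).toReal = F (θ i) x)
    -- Positive regression dependence (Assumption 3, all nulls false with θ_i > 0)
    (hPRD : ∀ k : Fin n, ∀ φ : (Fin n → ℝ) → ℝ,
      Measurable φ → Monotone φ → (∃ C, ∀ x, |φ x| ≤ C) →
      ∀ u u' : ℝ, u ≤ u' →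
        (Pr {ω | u ≤ T k ω} ≠ 0 → Pr {ω | u' ≤ T k ω} ≠ 0 →
          (∫ ω in {ω | u ≤ T k ω}, φ (fun i => T i ω) ∂Pr)
              / (Pr {ω | u ≤ T k ω}).toReal
            ≤ (∫ ω in {ω | u' ≤ T k ω}, φ (fun i => T i ω) ∂Pr)
              / (Pr {ω | u' ≤ T k ω}).toReal) ∧
        (Pr {ω | T k ω < u} ≠ 0 → Pr {ω | T k ω < u'} ≠ 0 →
          (∫ ω in {ω | T k ω < u}, φ (fun i => T i ω) ∂Pr)
              / (Pr {ω | T k ω < u}).toReal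
            ≤ (∫ ω in {ω | T k ω < u'}, φ (fun i => T i ω) ∂Pr)
              / (Pr {ω | T k ω < u'}).toReal))
    (α : ℝ) (hα : α ∈ Set.Ioo (0 : ℝ) 1)
    (c₁ c₂ : ℝ) (hc₁ : F 0 c₁ = α / 2) (hc₂ : F 0 c₂ = 1 - α / 2) :
    ∀ j : Fin n, (j : ℕ) + 1 < n →
      Pr {ω | ∀ l : Fin n, l ≤ j → c₂ < T l ω} ≠ 0 →
      (Pr ({ω | ∃ m : Fin n, j < m ∧ (∀ l : Fin n, j < l → l < m → c₂ < T l ω) ∧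
              T m ω < c₁}
            ∩ {ω | ∀ l : Fin n, l ≤ j → c₂ < T l ω})).toReal
          / (Pr {ω | ∀ l : Fin n, l ≤ j → c₂ < T l ω}).toReal
        ≤ α :=
  conditional_type3_error_bound_lemma4_general Pr F hFcont hFmono f hf_nonneg hf_cdf hMLR n θ hθpos
    T hT hcdf hPRD α hα c₁ c₂ hc₁ hc₂
end
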